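/- Let X be a Stein manifold with an antiholomorphic involution σ. Then there exists a proper holomorphic embedding F: X → ℂ^{2N} for some N such that F(σ(z)) = conj(F(z)) for all z ∈ X; in particular F maps Fix(σ) into ℝ^{2N}, and F(Fix(σ)) = F(X) ∩ ℝ^{2N}. -/
import Mathlib


/-- let `X` be a Stein manifold (encoded by its algebra `H` of
holomorphic functions and an assumed proper holomorphic embedding `f : X → ℂ^N`
with components in `H`), with an antiholomorphic involution `σ` (i.e.
`z ↦ conj (g (σ z))` is again holomorphic for `g` holomorphic).  Then there is a
proper holomorphic embedding `F : X → ℂ^{2N}` with `F(σ z) = conj (F z)` for all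
`z`; in particular `F` maps `Fix σ` into `ℝ^{2N}` and
`F(Fix σ) = F(X) ∩ ℝ^{2N}`. -/
theorem stein_embedding_compatible_with_involution
    {X : Type*} [TopologicalSpace X] (H : Set (X → ℂ))
    (hcont : ∀ g ∈ H, Continuous g)
    (hadd : ∀ g₁ ∈ H, ∀ g₂ ∈ H, g₁ + g₂ ∈ H)
    (hsmul : ∀ (c : ℂ), ∀ g ∈ H, c • g ∈ H)
    (σ : X → X) (hσ : Function.Involutive σ)
    (hanti : ∀ g ∈ H, (fun x => (starRingEnd ℂ) (g (σ x))) ∈ H)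
    (N : ℕ) (f : Fin N → X → ℂ) (hf : ∀ j, f j ∈ H)
    (hinj : Function.Injective (fun x (j : Fin N) => f j x))
    (hproper : IsProperMap (fun x (j : Fin N) => f j x)) :
    ∃ F : X → Fin (2 * N) → ℂ,
      (∀ k, (fun x => F x k) ∈ H) ∧
      Function.Injective F ∧ IsProperMap F ∧
      (∀ z, F (σ z) = fun k => (starRingEnd ℂ) (F z k)) ∧
      (∀ z, σ z = z → ∀ k, (F z k).im = 0) ∧
      Set.range F ∩ {g : Fin (2 * N) → ℂ | ∀ k, (g k).im = 0} =
        F '' {z | σ z = z} := by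
  classical
  set F : X → Fin (2 * N) → ℂ := fun x k =>
    if h : (k : ℕ) < N then
      (f ⟨k, h⟩ x + (starRingEnd ℂ) (f ⟨k, h⟩ (σ x))) / 2
    else
      (f ⟨(k : ℕ) - N, by have := k.isLt; omega⟩ x -
        (starRingEnd ℂ) (f ⟨(k : ℕ) - N, by have := k.isLt; omega⟩ (σ x))) / (2 * Complex.I)
    with hFdef
  -- recovery of f from F
  have hrec : ∀ (x : X) (j : Fin N),
      f j x = F x ⟨j, by have := j.isLt; omega⟩ +
        Complex.I * F x ⟨N + j, by have := j.isLt; omega⟩ := by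
    intro x j
    have h1 : ((⟨(j : ℕ), by have := j.isLt; omega⟩ : Fin (2 * N)) : ℕ) < N := j.isLt
    have h2 : ¬ ((⟨N + (j : ℕ), by have := j.isLt; omega⟩ : Fin (2 * N)) : ℕ) < N := by simp
    simp only [hFdef, dif_pos h1, dif_neg h2]
    have : N + (j : ℕ) - N = (j : ℕ) := by omega
    simp only [this, Fin.eta]
    field_simp
    ring
  have hsym : ∀ z, F (σ z) = fun k => (starRingEnd ℂ) (F z k) := by
    intro z
    funext k
    by_cases h : (k : ℕ) < N
    · simp only [hFdef, dif_pos h, hσ z, map_div₀, map_add, Complex.conj_conj, map_ofNat]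
      ring
    · simp only [hFdef, dif_neg h, hσ z, map_div₀, map_sub, map_mul, Complex.conj_conj,
        Complex.conj_I, map_ofNat]
      norm_num
      rw [div_eq_div_iff (by simp [Complex.I_ne_zero]) (by simp [Complex.I_ne_zero])]
      ring
  have hFH : ∀ k, (fun x => F x k) ∈ H := by
    intro k
    by_cases h : (k : ℕ) < N
    · have : (fun x => F x k) =
          ((1/2 : ℂ)) • (f ⟨k, h⟩ + fun x => (starRingEnd ℂ) (f ⟨k, h⟩ (σ x))) := by
        funext x
        simp only [hFdef, dif_pos h, Pi.smul_apply, Pi.add_apply, smul_eq_mul]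
        ring
      rw [this]
      exact hsmul _ _ (hadd _ (hf _) _ (hanti _ (hf _)))
    · set j : Fin N := ⟨(k : ℕ) - N, by have := k.isLt; omega⟩
      have : (fun x => F x k) =
          ((1/(2 * Complex.I) : ℂ)) • (f j + (-1 : ℂ) • fun x => (starRingEnd ℂ) (f j (σ x))) := by
        funext x
        simp only [hFdef, dif_neg h, Pi.smul_apply, Pi.add_apply, smul_eq_mul]
        ring
      rw [this]
      exact hsmul _ _ (hadd _ (hf _) _ (hsmul _ _ (hanti _ (hf _))))
  have hFcont : Continuous F := continuous_pi fun k => hcont _ (hFH k)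
  have hFinj : Function.Injective F := by
    intro a b hab
    apply hinj
    funext j
    simp only
    rw [hrec a j, hrec b j, hab]
  have hFproper : IsProperMap F := by
    rw [isProperMap_iff_ultrafilter]
    refine ⟨hFcont, fun 𝒰 y hy => ?_⟩
    set φ : (Fin (2 * N) → ℂ) → (Fin N → ℂ) := fun g j =>
      g ⟨j, by have := j.isLt; omega⟩ + Complex.I * g ⟨N + j, by have := j.isLt; omega⟩
    have hφcont : Continuous φ := by
      apply continuous_pi
      intro j
      exact (continuous_apply _).add (continuous_const.mul (continuous_apply _))
    have hcomp : (fun x (j : Fin N) => f j x) = φ ∘ F := by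
      funext x j
      exact hrec x j
    have htend : Filter.Tendsto (fun x (j : Fin N) => f j x) 𝒰 (nhds (φ y)) := by
      rw [hcomp]
      exact (hφcont.tendsto y).comp hy
    obtain ⟨x, hx1, hx2⟩ := (isProperMap_iff_ultrafilter.mp hproper).2 htend
    refine ⟨x, ?_, hx2⟩
    have := (hFcont.tendsto x).comp hx2
    exact tendsto_nhds_unique this hy
  have hfix : ∀ z, σ z = z → ∀ k, (F z k).im = 0 := by
    intro z hz k
    have h1 := congrFun (hsym z) k
    rw [hz] at h1
    have : (starRingEnd ℂ) (F z k) = F z k := h1.symm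
    rw [Complex.conj_eq_iff_im] at this
    exact this
  refine ⟨F, hFH, hFinj, hFproper, hsym, hfix, ?_⟩
  ext g
  constructor
  · rintro ⟨⟨x, rfl⟩, hreal⟩
    have hfx : σ x = x := by
      apply hFinj
      rw [hsym x]
      funext k
      rw [Complex.conj_eq_iff_im]
      exact hreal k
    exact ⟨x, hfx, rfl⟩
  · rintro ⟨z, hz, rfl⟩
    exact ⟨⟨z, rfl⟩, hfix z hz⟩
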